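/- arXiv:1510.04837 — 2 statements merged into one kernel-verified Lean document; each statement's English description precedes it below -/
import Mathlib

section
/- Let l, p be integers ≥ 0, n = l + 2p, and 0 ≤ ε ≤ 1. Then for every 0 ≤ ρ ≤ 1, R_n^{l,0}(ερ) = Σ_{n' = l, l+2, …, n} ( R_n^{n',0}(ε) − R_n^{n'+2,0}(ε) ) R_{n'}^{l,0}(ρ), where the term R_n^{n+2,0} occurring for n' = n is interpreted as 0; equivalently, the scaling coefficients C_{nn'}^{l,0}(ε) vanish for all n' = n+2, n+4, …. -/
open Real MeasureTheory

noncomputable def genBinom (a : ℝ) (p : ℕ) : ℝ :=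
  (∏ j ∈ Finset.range p, (a - j)) / (Nat.factorial p : ℝ)

noncomputable def jacobiP (k : ℕ) (a b : ℝ) (x : ℝ) : ℝ :=
  ∑ j ∈ Finset.range (k + 1),
    genBinom ((k : ℝ) + a) (k - j) * genBinom ((k : ℝ) + b) j *
      ((x - 1) / 2) ^ j * ((x + 1) / 2) ^ (k - j)

/-- generalized Pochhammer symbol `(x)_α = Γ(x+α)/Γ(x)` -/
noncomputable def pochG (x α : ℝ) : ℝ := Real.Gamma (x + α) / Real.Gamma x

/-- integer-order Pochhammer symbol `(x)_k = x(x+1)⋯(x+k−1)` -/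
noncomputable def pochN (x : ℝ) (k : ℕ) : ℝ := ∏ j ∈ Finset.range k, (x + j)

/-- generalized 3D Zernike radial function `R_{l+2p}^{l,α}` -/
noncomputable def R3 (α : ℝ) (l p : ℕ) (ρ : ℝ) : ℝ :=
  ρ ^ l * (1 - ρ ^ 2) ^ α * jacobiP p α ((l : ℝ) + 1 / 2) (2 * ρ ^ 2 - 1)

/-- generalized 2D Zernike radial function `²R_{m+2p}^{m,α}` -/
noncomputable def R2 (α : ℝ) (m p : ℕ) (ρ : ℝ) : ℝ :=
  ρ ^ m * (1 - ρ ^ 2) ^ α * jacobiP p α (m : ℝ) (2 * ρ ^ 2 - 1)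

/-- spherical Bessel function of real order `a` -/
noncomputable def sphBessel (a : ℝ) (z : ℝ) : ℝ :=
  Real.sqrt π / 2 * (z / 2) ^ a *
    ∑' k : ℕ, (-(z ^ 2) / 4) ^ k / ((Nat.factorial k : ℝ) * Real.Gamma ((k : ℝ) + a + 3 / 2))

/-- Gegenbauer polynomial `C_n^λ` -/
noncomputable def gegenbauer (n : ℕ) (lam : ℝ) (x : ℝ) : ℝ :=
  ∑ k ∈ Finset.range (n / 2 + 1),
    (-1) ^ k * Real.Gamma (((n - k : ℕ) : ℝ) + lam) /
      (Real.Gamma lam * (Nat.factorial k : ℝ) * (Nat.factorial (n - 2 * k) : ℝ)) *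
      (2 * x) ^ (n - 2 * k)

/-- Legendre polynomial `P_l` -/
noncomputable def legendreFun (l : ℕ) (x : ℝ) : ℝ :=
  (1 / 2 ^ l) * ∑ k ∈ Finset.range (l + 1),
    ((Nat.choose l k : ℝ)) ^ 2 * (x - 1) ^ (l - k) * (x + 1) ^ k

/-- associated Legendre function `P_l^m` -/
noncomputable def assocLegendre (l m : ℕ) (x : ℝ) : ℝ :=
  (1 - x ^ 2) ^ ((m : ℝ) / 2) * iteratedDeriv m (legendreFun l) x

/-- spherical harmonic `Y_l^m`, evaluated at a (unit) vector `v ∈ ℝ³`: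
`cos θ = v 2`, `φ = arg (v 0 + i v 1)`. -/
noncomputable def sphHarm (l : ℕ) (m : ℤ) (v : EuclideanSpace ℝ (Fin 3)) : ℂ :=
  (-1 : ℂ) ^ m *
    (Real.sqrt ((2 * l + 1) / (4 * π) *
      (Nat.factorial (l - m.natAbs) : ℝ) / (Nat.factorial (l + m.natAbs) : ℝ)) : ℝ) *
    (assocLegendre l m.natAbs (v 2) : ℝ) *
    Complex.exp (Complex.I * m * (Complex.arg (v 0 + Complex.I * v 1) : ℝ))

/-- generalized 3D Zernike function `Z_{nl}^{m,α}` on ℝ³ -/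
noncomputable def Z3 (α : ℝ) (l p : ℕ) (m : ℤ) (ω : EuclideanSpace ℝ (Fin 3)) : ℂ :=
  (R3 α l p ‖ω‖ : ℝ) * sphHarm l m (‖ω‖⁻¹ • ω)


/-!
Put `b = l + 1/2`, `x = ρ²`, `y = ε²`, so that `R_{l+2s}^{l,0}(ρ) = ρ^l P_s^{(0,b)}(2x - 1)`.
Expanding in monomials, `P_p^{(0,b)}(2x - 1) = ∑ c(p,m) x^m` with
`c(p,m) = (-1)^(p+m) C(p,m) C(p+m+b, p)` (`jacobiCoeff`), and the theorem becomes the identity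
`∑ₛ c(s,u) (e(s,t) - e(s+1,t)) = δ_{tu} c(p,u)` between the coefficients of `yᵗ xᵘ`, where
`e(s,t)` (`shiftedCoeff`) is the coefficient of `yᵗ` in `yˢ P_{p-s}^{(0,b+2s)}(2y - 1)`.
For `t ≠ u` the sum telescopes: the first-order recurrences of `c` and of `e` in `s` show that
`t - u` times its `s`-th term is `g(s) - g(s+1)` with `g(s) = (s - u) c(s,u) e(s,t)`, and `g`
vanishes at `s = 0` and `s = p + 1`. For `t = u` only the term `s = t` survives.
-/

open Finset

theorem sum_choose_mul_choose_mul_pow {R : Type*} [CommSemiring R] (x : R) (p k : ℕ) :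
    ∑ m ∈ range (p + 1), (p.choose m * m.choose k : R) * x ^ m
      = p.choose k * x ^ k * (x + 1) ^ (p - k) := by
  rcases lt_or_ge p k with hpk | hkp
  · rw [Nat.choose_eq_zero_of_lt hpk, Nat.cast_zero, zero_mul, zero_mul]
    refine sum_eq_zero fun m hm => ?_
    rw [Nat.choose_eq_zero_of_lt ((mem_range_succ_iff.mp hm).trans_lt hpk)]
    simp
  obtain ⟨n, rfl⟩ := Nat.exists_eq_add_of_le hkp
  rw [show k + n + 1 = k + (n + 1) by ring, sum_range_add, Nat.add_sub_cancel_left, add_pow,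
    mul_sum, sum_eq_zero fun m hm => by simp [Nat.choose_eq_zero_of_lt (mem_range.mp hm)],
    zero_add]
  refine sum_congr rfl fun i _ => ?_
  have h := Nat.choose_mul (n := k + n) (Nat.le_add_right k i)
  rw [Nat.add_sub_cancel_left, Nat.add_sub_cancel_left] at h
  rw [← Nat.cast_mul, h, Nat.cast_mul, pow_add, one_pow]
  ring

namespace Ring

variable {R : Type*} [CommRing R] [BinomialRing R]

theorem succ_mul_choose_succ_eq_sub_mul_choose (a : R) (n : ℕ) :
    (n + 1) * Ring.choose a (n + 1) = (a - n) * Ring.choose a n := by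
  have h := Ring.choose_smul_choose a (Nat.le_add_right n 1)
  rw [Nat.choose_succ_self_right, nsmul_eq_mul, Nat.add_sub_cancel_left,
    Ring.choose_one_right] at h
  push_cast at h
  rw [h, mul_comm]

theorem succ_mul_choose_succ_eq_mul_choose_sub_one (a : R) (n : ℕ) :
    (n + 1) * Ring.choose a (n + 1) = a * Ring.choose (a - 1) n := by
  have h := Ring.choose_smul_choose a (Nat.le_add_left 1 n)
  rw [Nat.choose_one_right, nsmul_eq_mul, Nat.add_sub_cancel, Ring.choose_one_right] at h
  push_cast at h
  exact h

theorem choose_add_natCast (a : R) (m p : ℕ) :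
    Ring.choose (a + m) p = ∑ k ∈ range (p + 1), Ring.choose a k * (m.choose (p - k) : R) := by
  rw [Ring.add_choose_eq p (Commute.all _ _), Nat.sum_antidiagonal_eq_sum_range_succ_mk]
  simp only [Ring.choose_natCast]

end Ring

open Polynomial in
theorem genBinom_eq_choose (a : ℝ) (p : ℕ) : genBinom a p = Ring.choose a p := by
  rw [Ring.choose_eq_smul, genBinom, ← descPochhammer_eval_eq_prod_range, ← aeval_eq_smeval,
    aeval_def, eval₂_eq_eval_map, descPochhammer_map, smul_eq_mul, div_eq_inv_mul]

section

variable (b : ℝ)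

noncomputable def jacobiCoeff (p m : ℕ) : ℝ :=
  (-1) ^ (p + m) * p.choose m * Ring.choose ((p : ℝ) + m + b) p

theorem jacobiCoeff_eq_zero_of_lt {p m : ℕ} (h : p < m) : jacobiCoeff b p m = 0 := by
  simp [jacobiCoeff, Nat.choose_eq_zero_of_lt h]

theorem jacobiP_zero_two_mul_sub_one_eq_sum (x : ℝ) (p : ℕ) :
    jacobiP p 0 b (2 * x - 1) = ∑ m ∈ range (p + 1), jacobiCoeff b p m * x ^ m := by
  have hcoeff (m : ℕ) : jacobiCoeff b p m * x ^ m = ∑ k ∈ range (p + 1),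
      (-1) ^ p * Ring.choose ((p : ℝ) + b) k
        * ((p.choose m * m.choose (p - k) : ℝ) * (-x) ^ m) := by
    rw [jacobiCoeff, add_right_comm, Ring.choose_add_natCast, mul_sum, sum_mul]
    refine sum_congr rfl fun k _ => ?_
    rw [neg_pow x, pow_add]
    ring
  simp only [hcoeff]
  rw [sum_comm]
  simp only [← mul_sum, sum_choose_mul_choose_mul_pow]
  refine sum_congr rfl fun k hk => ?_
  obtain ⟨n, rfl⟩ := Nat.exists_eq_add_of_le' (mem_range_succ_iff.mp hk)
  rw [add_zero, genBinom_eq_choose, genBinom_eq_choose, Ring.choose_natCast,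
    Nat.add_sub_cancel, Nat.add_sub_cancel_left, pow_add, neg_pow x,
    show (2 * x - 1 - 1) / 2 = -1 * (1 - x) by ring, mul_pow]
  have hsign : (-1 : ℝ) ^ n * (-1) ^ n = 1 := by rw [← mul_pow]; norm_num
  linear_combination -(Ring.choose ((n + k : ℕ) + b) k * ((n + k).choose n) * x ^ n
    * (-1) ^ k * (1 - x) ^ k) * hsign

theorem jacobiCoeff_succ_left (s u : ℕ) :
    ((s : ℝ) + 1 - u) * jacobiCoeff b (s + 1) u
      = -((s : ℝ) + 1 + u + b) * jacobiCoeff b s u := by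
  have hchoose : ((s : ℝ) + 1 - u) * ((s + 1).choose u : ℝ) = (s + 1) * s.choose u := by
    rcases le_or_gt u (s + 1) with hu | hu
    · have h := Nat.choose_mul_succ_eq s u
      rw [← Nat.cast_inj (R := ℝ), Nat.cast_mul, Nat.cast_mul, Nat.cast_sub hu] at h
      push_cast at h
      linear_combination -h
    · simp [Nat.choose_eq_zero_of_lt hu, Nat.choose_eq_zero_of_lt (Nat.lt_of_succ_lt hu)]
  have hring := Ring.succ_mul_choose_succ_eq_mul_choose_sub_one ((s : ℝ) + 1 + u + b) s
  rw [show (s : ℝ) + 1 + u + b - 1 = s + u + b by ring] at hring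
  simp only [jacobiCoeff, Nat.cast_succ]
  linear_combination (-1) ^ (s + 1 + u) * Ring.choose ((s : ℝ) + 1 + u + b) (s + 1) * hchoose
    + (-1) ^ (s + 1 + u) * (s.choose u : ℝ) * hring

noncomputable def shiftedCoeff (p s t : ℕ) : ℝ :=
  if s ≤ t then jacobiCoeff (b + 2 * s) (p - s) (t - s) else 0

theorem shiftedCoeff_eq {p s t : ℕ} (hst : s ≤ t) (htp : t ≤ p) :
    shiftedCoeff b p s t
      = (-1) ^ (p + t) * (p - s).choose (t - s) * Ring.choose ((p : ℝ) + t + b) (p - s) := by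
  obtain ⟨k, rfl⟩ := Nat.exists_eq_add_of_le hst
  obtain ⟨n, rfl⟩ := Nat.exists_eq_add_of_le htp
  rw [shiftedCoeff, if_pos hst, jacobiCoeff, Nat.add_sub_cancel_left,
    show s + k + n - s = k + n by omega, show s + k + n + (s + k) = k + n + k + 2 * s by ring,
    pow_add _ _ (2 * s), pow_mul, neg_one_sq, one_pow, mul_one]
  push_cast
  ring_nf

theorem shiftedCoeff_of_lt {p s t : ℕ} (h : t < s) : shiftedCoeff b p s t = 0 :=
  if_neg (Nat.not_le.mpr h)

theorem shiftedCoeff_succ {p t : ℕ} (s : ℕ) (htp : t ≤ p) :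
    ((s : ℝ) + t + b + 1) * shiftedCoeff b p (s + 1) t = (t - s) * shiftedCoeff b p s t := by
  rcases lt_trichotomy s t with hst | rfl | hts
  · obtain ⟨k, rfl⟩ := Nat.exists_eq_add_of_lt hst
    obtain ⟨n, rfl⟩ := Nat.exists_eq_add_of_le htp
    rw [shiftedCoeff_eq b (by omega) htp, shiftedCoeff_eq b hst.le htp,
      show s + k + 1 + n - (s + 1) = n + k by omega, show s + k + 1 - (s + 1) = k by omega,
      show s + k + 1 + n - s = n + k + 1 by omega, show s + k + 1 - s = k + 1 by omega]
    have hchoose := Nat.add_one_mul_choose_eq (n + k) k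
    rw [← Nat.cast_inj (R := ℝ)] at hchoose
    push_cast at hchoose ⊢
    have hring :=
      Ring.succ_mul_choose_succ_eq_sub_mul_choose ((s : ℝ) + k + 1 + n + (s + k + 1) + b) (n + k)
    push_cast at hring
    linear_combination (-1) ^ (s + k + 1 + n + (s + k + 1)) *
      (Ring.choose (↑s + ↑k + 1 + ↑n + (↑s + ↑k + 1) + b) (n + k + 1) * hchoose
        - ((n + k).choose k : ℝ) * hring)
  · simp [shiftedCoeff_of_lt b (Nat.lt_succ_self s)]
  · simp [shiftedCoeff_of_lt b hts, shiftedCoeff_of_lt b (Nat.lt_succ_of_lt hts)]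

theorem jacobiCoeff_self_mul_shiftedCoeff_self {p t : ℕ} (htp : t ≤ p) :
    jacobiCoeff b t t * shiftedCoeff b p t t = jacobiCoeff b p t := by
  obtain ⟨n, rfl⟩ := Nat.exists_eq_add_of_le htp
  have h := Ring.choose_smul_choose ((t : ℝ) + n + t + b) (Nat.le_add_left n t)
  rw [← Nat.choose_symm_add, nsmul_eq_mul, Nat.add_sub_cancel,
    show (t : ℝ) + n + t + b - n = t + t + b by ring] at h
  rw [shiftedCoeff_eq b le_rfl htp, jacobiCoeff, jacobiCoeff, Nat.sub_self, Nat.choose_zero_right,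
    Nat.choose_self, Nat.add_sub_cancel_left, ← two_mul, pow_mul, neg_one_sq, one_pow]
  push_cast
  linear_combination -(-1) ^ (t + n + t) * h

theorem sum_jacobiCoeff_mul_sub_shiftedCoeff {p t : ℕ} (u : ℕ) (htp : t ≤ p) :
    ∑ s ∈ range (p + 1), jacobiCoeff b s u * (shiftedCoeff b p s t - shiftedCoeff b p (s + 1) t)
      = if t = u then jacobiCoeff b p u else 0 := by
  split_ifs with htu
  · subst htu
    rw [sum_eq_single_of_mem t (mem_range.2 (Nat.lt_succ_of_le htp)),
      shiftedCoeff_of_lt b (Nat.lt_succ_self t), sub_zero,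
      jacobiCoeff_self_mul_shiftedCoeff_self b htp]
    intro s _ hst
    rcases Nat.lt_or_gt_of_ne hst with hst | hts
    · rw [jacobiCoeff_eq_zero_of_lt b hst, zero_mul]
    · rw [shiftedCoeff_of_lt b hts, shiftedCoeff_of_lt b (Nat.lt_succ_of_lt hts), sub_self,
        mul_zero]
  · set g : ℕ → ℝ := fun s => ((s : ℝ) - u) * jacobiCoeff b s u * shiftedCoeff b p s t
    have hstep (s : ℕ) : ((t : ℝ) - u) * (jacobiCoeff b s u *
        (shiftedCoeff b p s t - shiftedCoeff b p (s + 1) t)) = g s - g (s + 1) := by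
      have h1 := jacobiCoeff_succ_left b s u
      have h2 := shiftedCoeff_succ b s htp
      simp only [g]
      push_cast
      linear_combination shiftedCoeff b p (s + 1) t * h1 - jacobiCoeff b s u * h2
    have hg0 : g 0 = 0 := by
      rcases Nat.eq_zero_or_pos u with rfl | hu
      · simp [g]
      · simp [g, jacobiCoeff_eq_zero_of_lt b hu]
    have hgp : g (p + 1) = 0 := by simp [g, shiftedCoeff_of_lt b (Nat.lt_succ_of_le htp)]
    have hsum : ((t : ℝ) - u) * ∑ s ∈ range (p + 1),
        jacobiCoeff b s u * (shiftedCoeff b p s t - shiftedCoeff b p (s + 1) t) = 0 := by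
      rw [mul_sum, sum_congr rfl fun s _ => hstep s, sum_range_sub', hg0, hgp, sub_zero]
    exact (mul_eq_zero.mp hsum).resolve_left (sub_ne_zero.mpr (Nat.cast_injective.ne htu))

theorem jacobiP_zero_two_mul_sub_one_eq_sum_range_of_lt (x : ℝ) {p N : ℕ} (hpN : p < N) :
    jacobiP p 0 b (2 * x - 1) = ∑ m ∈ range N, jacobiCoeff b p m * x ^ m := by
  rw [jacobiP_zero_two_mul_sub_one_eq_sum]
  refine sum_subset (range_subset_range.mpr hpN) fun m _ hm => ?_
  rw [jacobiCoeff_eq_zero_of_lt b (by simpa using hm), zero_mul]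

theorem pow_mul_jacobiP_zero_eq_sum_shiftedCoeff (y : ℝ) {p s : ℕ} (hsp : s ≤ p) :
    y ^ s * jacobiP (p - s) 0 (b + 2 * s) (2 * y - 1)
      = ∑ t ∈ range (p + 1), shiftedCoeff b p s t * y ^ t := by
  obtain ⟨n, rfl⟩ := Nat.exists_eq_add_of_le hsp
  rw [add_assoc, sum_range_add, sum_eq_zero fun t ht => by
      rw [shiftedCoeff_of_lt b (mem_range.mp ht), zero_mul],
    zero_add, Nat.add_sub_cancel_left, jacobiP_zero_two_mul_sub_one_eq_sum, mul_sum]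
  refine sum_congr rfl fun i _ => ?_
  rw [shiftedCoeff, if_pos (Nat.le_add_right s i), Nat.add_sub_cancel_left,
    Nat.add_sub_cancel_left, pow_add]
  ring

theorem pow_mul_jacobiP_zero_sub_eq_sum_shiftedCoeff (y : ℝ) {p s : ℕ} (hsp : s ≤ p) :
    (y ^ s * jacobiP (p - s) 0 (b + 2 * s) (2 * y - 1) -
      if s = p then 0
      else y ^ (s + 1) * jacobiP (p - (s + 1)) 0 (b + 2 * (s + 1 : ℕ)) (2 * y - 1))
      = ∑ t ∈ range (p + 1), (shiftedCoeff b p s t - shiftedCoeff b p (s + 1) t) * y ^ t := by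
  rw [sum_congr rfl fun t _ => sub_mul _ _ _, sum_sub_distrib,
    ← pow_mul_jacobiP_zero_eq_sum_shiftedCoeff b y hsp]
  congr 1
  split_ifs with h
  · subst h
    exact (sum_eq_zero fun t ht => by
      rw [shiftedCoeff_of_lt b (mem_range.mp ht), zero_mul]).symm
  · exact pow_mul_jacobiP_zero_eq_sum_shiftedCoeff b y (by omega)

theorem jacobiP_zero_scaling (x y : ℝ) (p : ℕ) :
    jacobiP p 0 b (2 * (x * y) - 1)
      = ∑ s ∈ range (p + 1),
          (y ^ s * jacobiP (p - s) 0 (b + 2 * s) (2 * y - 1) -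
            if s = p then 0
            else y ^ (s + 1) * jacobiP (p - (s + 1)) 0 (b + 2 * (s + 1 : ℕ)) (2 * y - 1))
          * jacobiP s 0 b (2 * x - 1) := by
  symm
  calc _ = ∑ s ∈ range (p + 1), ∑ t ∈ range (p + 1), ∑ u ∈ range (p + 1),
          (shiftedCoeff b p s t - shiftedCoeff b p (s + 1) t) * y ^ t
            * (jacobiCoeff b s u * x ^ u) :=
        sum_congr rfl fun s hs => by
          rw [pow_mul_jacobiP_zero_sub_eq_sum_shiftedCoeff b y (mem_range_succ_iff.mp hs),
            jacobiP_zero_two_mul_sub_one_eq_sum_range_of_lt b x (mem_range.mp hs), sum_mul_sum]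
    _ = ∑ t ∈ range (p + 1), ∑ u ∈ range (p + 1), ∑ s ∈ range (p + 1),
          (shiftedCoeff b p s t - shiftedCoeff b p (s + 1) t) * y ^ t
            * (jacobiCoeff b s u * x ^ u) := by
        rw [sum_comm]
        exact sum_congr rfl fun t _ => sum_comm
    _ = ∑ t ∈ range (p + 1), ∑ u ∈ range (p + 1),
          (if t = u then jacobiCoeff b p u else 0) * (y ^ t * x ^ u) := by
        refine sum_congr rfl fun t ht => sum_congr rfl fun u _ => ?_
        rw [← sum_jacobiCoeff_mul_sub_shiftedCoeff b u (mem_range_succ_iff.mp ht),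
          sum_mul]
        exact sum_congr rfl fun s _ => by ring
    _ = jacobiP p 0 b (2 * (x * y) - 1) := by
        rw [jacobiP_zero_two_mul_sub_one_eq_sum]
        refine sum_congr rfl fun t ht => ?_
        simp only [ite_mul, zero_mul]
        rw [sum_ite_eq, if_pos ht, mul_pow, mul_comm (x ^ t)]

end

theorem R3_zero_add_two_mul (l s q : ℕ) (ε : ℝ) :
    R3 0 (l + 2 * s) q ε
      = ε ^ l * ((ε ^ 2) ^ s * jacobiP q 0 ((l : ℝ) + 1 / 2 + 2 * s) (2 * ε ^ 2 - 1)) := by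
  rw [R3, Real.rpow_zero, mul_one, pow_add, pow_mul, mul_assoc]
  push_cast
  ring_nf

theorem stmt7_general (l p : ℕ) (ε : ℝ) (ρ : ℝ) :
    R3 0 l p (ε * ρ)
      = ∑ s ∈ Finset.range (p + 1),
          (R3 0 (l + 2 * s) (p - s) ε -
            if s = p then 0 else R3 0 (l + 2 * s + 2) (p - s - 1) ε) * R3 0 l s ρ := by
  have hR3 (q : ℕ) (r : ℝ) :
      R3 0 l q r = r ^ l * jacobiP q 0 ((l : ℝ) + 1 / 2) (2 * r ^ 2 - 1) := by
    simpa using R3_zero_add_two_mul l 0 q r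
  rw [hR3, show (ε * ρ) ^ 2 = ρ ^ 2 * ε ^ 2 by ring, jacobiP_zero_scaling, mul_sum]
  refine sum_congr rfl fun s _ => ?_
  rw [R3_zero_add_two_mul, show l + 2 * s + 2 = l + 2 * (s + 1) by ring, R3_zero_add_two_mul,
    Nat.sub_sub, hR3]
  split_ifs <;> ring

/-- scaling of standard 3D Zernike radial polynomials (`α = 0`), `n = l + 2p`:
`R_n^{l,0}(ερ) = Σ_{n'=l,l+2,…,n} (R_n^{n',0}(ε) − R_n^{n'+2,0}(ε)) R_{n'}^{l,0}(ρ)`,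
where the term `R_n^{n+2,0}` occurring for `n' = n` (i.e. `s = p`) is interpreted as `0`. -/
theorem stmt7 (l p : ℕ) (ε : ℝ) (hε : ε ∈ Set.Icc (0:ℝ) 1) (ρ : ℝ) (hρ : ρ ∈ Set.Icc (0:ℝ) 1) :
    R3 0 l p (ε * ρ)
      = ∑ s ∈ Finset.range (p + 1),
          (R3 0 (l + 2 * s) (p - s) ε -
            if s = p then 0 else R3 0 (l + 2 * s + 2) (p - s - 1) ε) * R3 0 l s ρ :=
  stmt7_general l p ε ρ
end

section
/- Let α > −1 be real and l, p integers ≥ 0. Then ²R_{l+2+2p}^{l+2,α}(ρ) = Σ_{s=0}^{p+1} ²C_{ps}^{l+2→l,α} ²R_{l+2s}^{l,α}(ρ) for all 0 ≤ ρ ≤ 1, where for s = 0, 1, …, p, ²C_{ps}^{l+2→l,α} = (−1)^{p−s} (l+1) · (α+1)_p (α+l+1)_s / [ (α+l+2)_{p+1} (α+1)_s ] · (α+l+2s+1)/(α+l+1), and ²C_{p,p+1}^{l+2→l,α} = (p+1)/(α+l+p+2). -/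
open Real MeasureTheory

/-!
With `u = (x - 1) / 2` and `v = (x + 1) / 2`, the defining sum exhibits `jacobiP n a b x` as a
binary form of degree `n` in `(u, v)`, evaluated where `v - u = 1`. Comparing coefficients of such
forms gives the two contiguous relations
`(2n+a+b+2) v P_n^{(a,b+1)} = (n+b+1) P_n^{(a,b)} + (n+1) P_{n+1}^{(a,b)}` and
`(2n+a+b+3) P_{n+1}^{(a,b)} = (n+a+b+2) P_{n+1}^{(a,b+1)} + (n+a+1) P_n^{(a,b+1)}`.
By induction on `n` the second expands `P_n^{(a,b+1)}` in the `P_s^{(a,b)}`; substituting this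
into the first (with `b + 1` for `b`) expands `v P_p^{(a,b+2)}`. At `x = 2ρ² - 1` we have `v = ρ²`,
and multiplying by `ρ^l (1 - ρ²)^α` gives the connection formula.
-/

open Finset

lemma genBinom_zero (x : ℝ) : genBinom x 0 = 1 := by simp [genBinom]

lemma genBinom_succ (x : ℝ) (k : ℕ) :
    genBinom x (k + 1) = genBinom x k * (x - k) / (k + 1) := by
  simp only [genBinom, prod_range_succ, Nat.factorial_succ]
  push_cast
  field_simp

lemma genBinom_add_one_succ (x : ℝ) (k : ℕ) :
    genBinom (x + 1) (k + 1) = (x + 1) * genBinom x k / (k + 1) := by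
  simp only [genBinom, prod_range_succ', Nat.factorial_succ]
  push_cast
  field_simp
  simp only [add_sub_add_right_eq_sub]
  ring

section HomogeneousForm

def homogForm (c : ℕ → ℕ → ℝ) (n : ℕ) (u v : ℝ) : ℝ :=
  ∑ p ∈ antidiagonal n, c p.1 p.2 * u ^ p.1 * v ^ p.2

def shiftFst (c : ℕ → ℕ → ℝ) : ℕ → ℕ → ℝ
  | 0, _ => 0
  | i + 1, k => c i k

def shiftSnd (c : ℕ → ℕ → ℝ) : ℕ → ℕ → ℝ
  | _, 0 => 0
  | i, k + 1 => c i k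

variable (c d : ℕ → ℕ → ℝ) (n : ℕ) (u v : ℝ)

lemma mul_homogForm_eq_shiftFst : u * homogForm c n u v = homogForm (shiftFst c) (n + 1) u v := by
  simp only [homogForm, Nat.sum_antidiagonal_succ, shiftFst, mul_sum, zero_mul, zero_add]
  exact sum_congr rfl fun _ _ => by ring

lemma mul_homogForm_eq_shiftSnd : v * homogForm c n u v = homogForm (shiftSnd c) (n + 1) u v := by
  simp only [homogForm, Nat.sum_antidiagonal_succ', shiftSnd, mul_sum, zero_mul, zero_add]
  exact sum_congr rfl fun _ _ => by ring

lemma const_mul_homogForm (A : ℝ) :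
    A * homogForm c n u v = homogForm (fun i k => A * c i k) n u v := by
  simp only [homogForm, mul_sum, mul_assoc]

lemma homogForm_add :
    homogForm c n u v + homogForm d n u v = homogForm (fun i k => c i k + d i k) n u v := by
  simp only [homogForm, ← sum_add_distrib, add_mul]

lemma homogForm_sub :
    homogForm c n u v - homogForm d n u v = homogForm (fun i k => c i k - d i k) n u v := by
  simp only [homogForm, ← sum_sub_distrib, sub_mul]

lemma homogForm_congr (h : ∀ i k, i + k = n → c i k = d i k) :
    homogForm c n u v = homogForm d n u v :=
  sum_congr rfl fun p hp => by rw [h p.1 p.2 (mem_antidiagonal.mp hp)]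

end HomogeneousForm

noncomputable def binomProdCoeff (A B : ℝ) (i k : ℕ) : ℝ := genBinom A k * genBinom B i

lemma jacobiP_eq_homogForm (n : ℕ) (a b x : ℝ) :
    jacobiP n a b x = homogForm (binomProdCoeff (n + a) (n + b)) n ((x - 1) / 2) ((x + 1) / 2) := by
  rw [homogForm, Nat.sum_antidiagonal_eq_sum_range_succ_mk, jacobiP]
  exact sum_congr rfl fun j _ => by rw [binomProdCoeff]

lemma jacobiP_eq_homogForm_of_eq {n : ℕ} {a b A B : ℝ} (hA : n + a = A) (hB : n + b = B)
    (x : ℝ) :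
    jacobiP n a b x = homogForm (binomProdCoeff A B) n ((x - 1) / 2) ((x + 1) / 2) :=
  hA ▸ hB ▸ jacobiP_eq_homogForm n a b x

section Contiguous

variable (A B u v : ℝ) (n : ℕ)

lemma homogForm_contiguous_mul :
    (A + B + 2) * (v * homogForm (binomProdCoeff A (B + 1)) n u v)
      = (B + 1) * ((v - u) * homogForm (binomProdCoeff A B) n u v)
        + (n + 1) * homogForm (binomProdCoeff (A + 1) (B + 1)) (n + 1) u v := by
  rw [sub_mul v u, mul_homogForm_eq_shiftSnd, mul_homogForm_eq_shiftSnd, mul_homogForm_eq_shiftFst]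
  simp only [const_mul_homogForm, homogForm_sub, homogForm_add]
  refine homogForm_congr _ _ _ _ _ ?_
  rintro (_ | i) (_ | k) h
  · omega
  all_goals simp only [shiftFst, shiftSnd, binomProdCoeff, genBinom_add_one_succ]
  all_goals simp only [genBinom_succ, genBinom_zero]
  · obtain rfl : n = k := by omega
    field_simp
    ring
  · obtain rfl : n = i := by omega
    field_simp
    ring
  · obtain rfl : n = i + k + 1 := by omega
    push_cast
    field_simp
    ring

lemma homogForm_contiguous_succ :
    (A + B + 2) * homogForm (binomProdCoeff (A + 1) B) (n + 1) u v
      = (A + B + 1 - n) * homogForm (binomProdCoeff (A + 1) (B + 1)) (n + 1) u v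
        + (A + 1) * ((v - u) * homogForm (binomProdCoeff A B) n u v) := by
  rw [sub_mul v u, mul_homogForm_eq_shiftSnd, mul_homogForm_eq_shiftFst]
  simp only [const_mul_homogForm, homogForm_sub, homogForm_add]
  refine homogForm_congr _ _ _ _ _ ?_
  rintro (_ | i) (_ | k) h
  · omega
  all_goals simp only [shiftFst, shiftSnd, binomProdCoeff, genBinom_add_one_succ]
  all_goals simp only [genBinom_succ, genBinom_zero]
  · obtain rfl : n = k := by omega
    field_simp
    ring
  · obtain rfl : n = i := by omega
    field_simp
    ring
  · obtain rfl : n = i + k + 1 := by omega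
    push_cast
    field_simp
    ring

end Contiguous

lemma jacobiP_contiguous_mul (n : ℕ) (a b x : ℝ) :
    (2 * n + a + b + 2) * ((x + 1) / 2 * jacobiP n a (b + 1) x)
      = (n + b + 1) * jacobiP n a b x + (n + 1) * jacobiP (n + 1) a b x := by
  have h := homogForm_contiguous_mul (n + a) (n + b) ((x - 1) / 2) ((x + 1) / 2) n
  rw [show (x + 1) / 2 - (x - 1) / 2 = 1 by ring, one_mul] at h
  rw [jacobiP_eq_homogForm_of_eq rfl (add_assoc (n : ℝ) b 1).symm, jacobiP_eq_homogForm,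
    jacobiP_eq_homogForm_of_eq (by push_cast; ring : ((n + 1 : ℕ) : ℝ) + a = n + a + 1)
      (by push_cast; ring : ((n + 1 : ℕ) : ℝ) + b = n + b + 1)]
  linear_combination h

lemma jacobiP_contiguous_succ (n : ℕ) (a b x : ℝ) :
    (2 * n + a + b + 3) * jacobiP (n + 1) a b x
      = (n + a + b + 2) * jacobiP (n + 1) a (b + 1) x + (n + a + 1) * jacobiP n a (b + 1) x := by
  have h := homogForm_contiguous_succ (n + a) (n + b + 1) ((x - 1) / 2) ((x + 1) / 2) n
  rw [show (x + 1) / 2 - (x - 1) / 2 = 1 by ring, one_mul] at h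
  rw [jacobiP_eq_homogForm_of_eq (by push_cast; ring : ((n + 1 : ℕ) : ℝ) + a = n + a + 1)
      (by push_cast; ring : ((n + 1 : ℕ) : ℝ) + b = n + b + 1),
    jacobiP_eq_homogForm_of_eq (by push_cast; ring : ((n + 1 : ℕ) : ℝ) + a = n + a + 1)
      (by push_cast; ring : ((n + 1 : ℕ) : ℝ) + (b + 1) = n + b + 1 + 1),
    jacobiP_eq_homogForm_of_eq rfl (add_assoc (n : ℝ) b 1).symm]
  linear_combination h

section Pochhammer

lemma pochN_succ (x : ℝ) (k : ℕ) : pochN x (k + 1) = pochN x k * (x + k) :=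
  prod_range_succ _ _

lemma pochN_one (x : ℝ) : pochN x 1 = x := by simp [pochN]

lemma pochN_add (x : ℝ) (m k : ℕ) : pochN x (m + k) = pochN x m * pochN (x + m) k := by
  rw [pochN, pochN, pochN, prod_range_add]
  congr 1
  exact prod_congr rfl fun j _ => by push_cast; ring

lemma pochN_pos {x : ℝ} (hx : 0 < x) (k : ℕ) : 0 < pochN x k :=
  prod_pos fun _ _ => by positivity

end Pochhammer

lemma jacobiP_zero (a b x : ℝ) : jacobiP 0 a b x = 1 := by
  simp [jacobiP, genBinom_zero]

noncomputable def jacobiConnCoeff (a b : ℝ) (n s : ℕ) : ℝ :=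
  (-1) ^ (n - s) * (a + b + 2 * s + 1) * pochN (a + s + 1) (n - s)
    / pochN (a + b + s + 1) (n - s + 1)

lemma jacobiConnCoeff_self (a b : ℝ) (n : ℕ) :
    jacobiConnCoeff a b n n = (a + b + 2 * n + 1) / (a + b + n + 1) := by
  simp [jacobiConnCoeff, pochN]

lemma jacobiConnCoeff_succ_of_le (a b : ℝ) {n s : ℕ} (hs : s ≤ n) :
    jacobiConnCoeff a b (n + 1) s = -(n + a + 1) / (n + a + b + 2) * jacobiConnCoeff a b n s := by
  obtain ⟨m, rfl⟩ := Nat.exists_eq_add_of_le hs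
  simp only [jacobiConnCoeff, show s + m + 1 - s = m + 1 by omega, Nat.add_sub_cancel_left,
    pochN_succ, pow_succ]
  rw [div_mul_div_comm]
  congr 1 <;> push_cast <;> ring

lemma jacobiP_param_succ_eq_sum {a b : ℝ} (hab : -1 < a + b) (x : ℝ) :
    ∀ n : ℕ,
      jacobiP n a (b + 1) x = ∑ s ∈ range (n + 1), jacobiConnCoeff a b n s * jacobiP s a b x
  | 0 => by simp [jacobiP_zero, jacobiConnCoeff_self, show a + b + 1 ≠ 0 by linarith]
  | n + 1 => by
    have hd : (n : ℝ) + a + b + 2 ≠ 0 := by linarith [n.cast_nonneg (α := ℝ)]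
    have hrec := jacobiP_contiguous_succ n a b x
    have hsum : ∑ s ∈ range (n + 1), jacobiConnCoeff a b (n + 1) s * jacobiP s a b x
        = -(n + a + 1) / (n + a + b + 2) * jacobiP n a (b + 1) x := by
      rw [jacobiP_param_succ_eq_sum hab x n, mul_sum]
      exact sum_congr rfl fun s hs => by
        rw [jacobiConnCoeff_succ_of_le a b (mem_range_succ_iff.mp hs), mul_assoc]
    rw [sum_range_succ, hsum, jacobiConnCoeff_self,
      show (a + b + 2 * ((n + 1 : ℕ) : ℝ) + 1) / (a + b + ((n + 1 : ℕ) : ℝ) + 1)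
        = (2 * n + a + b + 3) / (n + a + b + 2) by push_cast; ring]
    field_simp
    linear_combination -hrec

/-- The coefficient `²C_{ps}^{l+2→l,α}` with `α = a`, `l = b`. -/
noncomputable def zernikeConnCoeff (a b : ℝ) (p s : ℕ) : ℝ :=
  if s = p + 1 then ((p : ℝ) + 1) / (a + b + (p : ℝ) + 2)
  else (-1) ^ (p - s) * (b + 1) * (pochN (a + 1) p * pochN (a + b + 1) s)
    / (pochN (a + b + 2) (p + 1) * pochN (a + 1) s) * ((a + b + 2 * (s : ℝ) + 1) / (a + b + 1))

lemma zernikeConnCoeff_of_le {a b : ℝ} (ha : -1 < a) (hab : -1 < a + b) {p s : ℕ}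
    (hs : s ≤ p) :
    zernikeConnCoeff a b p s = (b + 1) / (a + b + p + 2) * jacobiConnCoeff a b p s := by
  obtain ⟨m, rfl⟩ := Nat.exists_eq_add_of_le hs
  have hab' : a + b + 1 ≠ 0 := by linarith
  have hrise : pochN (a + 1) (s + m) = pochN (a + 1) s * pochN (a + s + 1) m := by
    rw [pochN_add, add_right_comm]
  have hfall : pochN (a + b + 2) (s + m + 1)
      = pochN (a + b + 1) s * (pochN (a + b + s + 1) (m + 1) * (a + b + (s + m : ℕ) + 2))
        / (a + b + 1) := by
    have h1 := pochN_add (a + b + 1) 1 (s + m + 1)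
    rw [show 1 + (s + m + 1) = s + (m + 1 + 1) by omega, pochN_add, pochN_succ _ (m + 1),
      pochN_one] at h1
    rw [eq_div_iff hab']
    push_cast at h1 ⊢
    ring_nf at h1 ⊢
    linear_combination -h1
  have hA := pochN_pos (by linarith : 0 < a + 1) s
  have hB := pochN_pos (by linarith : 0 < a + b + 1) s
  have hC := pochN_pos (by linarith [s.cast_nonneg (α := ℝ)] : 0 < a + b + s + 1) (m + 1)
  have hD : a + b + ((s + m : ℕ) : ℝ) + 2 ≠ 0 := by
    push_cast
    linarith [s.cast_nonneg (α := ℝ), m.cast_nonneg (α := ℝ)]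
  rw [zernikeConnCoeff, if_neg (by omega), jacobiConnCoeff, Nat.add_sub_cancel_left, hrise, hfall]
  field_simp

lemma zernikeConnCoeff_mul_of_le {a b : ℝ} (ha : -1 < a) (hab : -1 < a + b) {p s : ℕ}
    (hs : s ≤ p) :
    (2 * p + a + b + 3) * zernikeConnCoeff a b p s
      = (p + b + 2) * jacobiConnCoeff a b p s + (p + 1) * jacobiConnCoeff a b (p + 1) s := by
  have hd : (p : ℝ) + a + b + 2 ≠ 0 := by linarith [p.cast_nonneg (α := ℝ)]
  rw [zernikeConnCoeff_of_le ha hab hs, jacobiConnCoeff_succ_of_le a b hs,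
    show a + b + p + 2 = p + a + b + 2 by ring]
  field_simp
  ring

lemma zernikeConnCoeff_mul_self_succ {a b : ℝ} (hab : -1 < a + b) (p : ℕ) :
    (2 * p + a + b + 3) * zernikeConnCoeff a b p (p + 1)
      = (p + 1) * jacobiConnCoeff a b (p + 1) (p + 1) := by
  have hd : a + b + p + 2 ≠ 0 := by linarith [p.cast_nonneg (α := ℝ)]
  rw [zernikeConnCoeff, if_pos rfl, jacobiConnCoeff_self,
    show a + b + ((p + 1 : ℕ) : ℝ) + 1 = a + b + p + 2 by push_cast; ring]
  push_cast
  field_simp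
  ring

lemma half_add_one_mul_jacobiP_eq_sum {a b : ℝ} (ha : -1 < a) (hab : -1 < a + b) (p : ℕ)
    (x : ℝ) :
    (x + 1) / 2 * jacobiP p a (b + 2) x
      = ∑ s ∈ range (p + 2), zernikeConnCoeff a b p s * jacobiP s a b x := by
  have hK : (2 * p + a + b + 3 : ℝ) ≠ 0 := by linarith [p.cast_nonneg (α := ℝ)]
  have hL := jacobiP_contiguous_mul p a (b + 1) x
  rw [show b + 1 + 1 = b + 2 by ring, jacobiP_param_succ_eq_sum (by linarith) x p,
    jacobiP_param_succ_eq_sum (by linarith) x (p + 1)] at hL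
  refine mul_left_cancel₀ hK ?_
  calc (2 * p + a + b + 3) * ((x + 1) / 2 * jacobiP p a (b + 2) x)
      = (p + b + 2) * ∑ s ∈ range (p + 1), jacobiConnCoeff a b p s * jacobiP s a b x
          + (p + 1) * ∑ s ∈ range (p + 2), jacobiConnCoeff a b (p + 1) s * jacobiP s a b x := by
        linear_combination hL
    _ = ∑ s ∈ range (p + 1), ((p + b + 2) * jacobiConnCoeff a b p s
            + (p + 1) * jacobiConnCoeff a b (p + 1) s) * jacobiP s a b x
          + (p + 1) * jacobiConnCoeff a b (p + 1) (p + 1) * jacobiP (p + 1) a b x := by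
        rw [sum_range_succ _ (p + 1), mul_add, mul_sum, mul_sum, ← add_assoc, ← sum_add_distrib]
        simp only [add_mul, mul_assoc]
    _ = (2 * p + a + b + 3)
          * ∑ s ∈ range (p + 2), zernikeConnCoeff a b p s * jacobiP s a b x := by
        rw [sum_range_succ _ (p + 1), mul_add, mul_sum, ← mul_assoc,
          zernikeConnCoeff_mul_self_succ hab]
        congr 1
        exact sum_congr rfl fun s hs => by
          rw [← mul_assoc, zernikeConnCoeff_mul_of_le ha hab (mem_range_succ_iff.mp hs)]

theorem stmt15_general (α : ℝ) (hα : -1 < α) (l p : ℕ) (ρ : ℝ) :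
    R2 α (l + 2) p ρ
      = ∑ s ∈ Finset.range (p + 2),
          (if s = p + 1 then ((p : ℝ) + 1) / (α + (l : ℝ) + (p : ℝ) + 2)
           else (-1) ^ (p - s) * ((l : ℝ) + 1) *
             (pochN (α + 1) p * pochN (α + (l : ℝ) + 1) s)
             / (pochN (α + (l : ℝ) + 2) (p + 1) * pochN (α + 1) s) *
             ((α + (l : ℝ) + 2 * (s : ℝ) + 1) / (α + (l : ℝ) + 1)))
          * R2 α l s ρ := by
  have key := half_add_one_mul_jacobiP_eq_sum (b := l) hα
    (by linarith [l.cast_nonneg (α := ℝ)]) p (2 * ρ ^ 2 - 1)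
  rw [show (2 * ρ ^ 2 - 1 + 1) / 2 = ρ ^ 2 by ring] at key
  calc R2 α (l + 2) p ρ
      = ρ ^ l * (1 - ρ ^ 2) ^ α * (ρ ^ 2 * jacobiP p α (l + 2) (2 * ρ ^ 2 - 1)) := by
        rw [R2]
        push_cast
        ring
    _ = _ := by
        rw [key, mul_sum]
        exact sum_congr rfl fun s _ => by rw [R2, zernikeConnCoeff]; ring

/-- the 2D connection formula
`²R_{l+2+2p}^{l+2,α} = Σ_{s=0}^{p+1} ²C_{ps}^{l+2→l,α} ²R_{l+2s}^{l,α}`. -/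
theorem stmt15 (α : ℝ) (hα : -1 < α) (l p : ℕ) (ρ : ℝ) (hρ : ρ ∈ Set.Icc (0:ℝ) 1) :
    R2 α (l + 2) p ρ
      = ∑ s ∈ Finset.range (p + 2),
          (if s = p + 1 then ((p : ℝ) + 1) / (α + (l : ℝ) + (p : ℝ) + 2)
           else (-1) ^ (p - s) * ((l : ℝ) + 1) *
             (pochN (α + 1) p * pochN (α + (l : ℝ) + 1) s)
             / (pochN (α + (l : ℝ) + 2) (p + 1) * pochN (α + 1) s) *
             ((α + (l : ℝ) + 2 * (s : ℝ) + 1) / (α + (l : ℝ) + 1)))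
          * R2 α l s ρ :=
  stmt15_general α hα l p ρ
end
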